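/- Let r be a positive integer and ρ > 0 a real number. Let S be a subset of ℝ^r contained in a closed Euclidean ball of radius ρ. Then for every real number γ ≥ 1, there exist at most ⌊(2γ+1)^r⌋ closed balls of radius ρ/γ, centered at points of S, whose union covers S. -/

import Mathlib

/-!
A maximal `ρ/γ`-separated subset of `S` is a `ρ/γ`-cover of `S`, so it suffices to bound the
size of such a set. The closed balls of radius `ρ/(2γ)` around its points are pairwise disjoint
and lie in the ball of radius `ρ + ρ/(2γ)` around `x₀`; comparing Haar volumes, which scale
like the `r`-th power of the radius, gives at most `(2γ+1)^r` points.
-/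

open Metric MeasureTheory Module Finset
open scoped NNReal ENNReal

section Packing

variable {E : Type*} [NormedAddCommGroup E] [NormedSpace ℝ E] [FiniteDimensional ℝ E]

theorem card_mul_pow_le_of_pairwiseDisjoint_closedBall {F : Finset E} {x : E} {ρ δ : ℝ}
    (hρ : 0 ≤ ρ) (hδ : 0 ≤ δ) (hF : (F : Set E) ⊆ closedBall x ρ)
    (hdisj : (F : Set E).PairwiseDisjoint (closedBall · δ)) :
    (#F : ℝ) * δ ^ finrank ℝ E ≤ (ρ + δ) ^ finrank ℝ E := by
  let _ : MeasurableSpace E := borel E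
  have _ : BorelSpace E := ⟨rfl⟩
  set μ : Measure E := Measure.addHaar
  have hunion : (⋃ t ∈ F, closedBall t δ) ⊆ closedBall x (ρ + δ) :=
    Set.iUnion₂_subset fun t ht ↦
      closedBall_subset_closedBall' (by linarith [mem_closedBall.1 (hF (mem_coe.2 ht))])
  have hvol : (#F : ℝ≥0∞) * ENNReal.ofReal (δ ^ finrank ℝ E) * μ (ball 0 1) ≤
      ENNReal.ofReal ((ρ + δ) ^ finrank ℝ E) * μ (ball 0 1) :=
    calc (#F : ℝ≥0∞) * ENNReal.ofReal (δ ^ finrank ℝ E) * μ (ball 0 1)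
        = ∑ t ∈ F, μ (closedBall t δ) := by
          simp [Measure.addHaar_closedBall μ _ hδ, mul_assoc]
      _ = μ (⋃ t ∈ F, closedBall t δ) :=
          (measure_biUnion_finset hdisj fun _ _ ↦ measurableSet_closedBall).symm
      _ ≤ μ (closedBall x (ρ + δ)) := measure_mono hunion
      _ = ENNReal.ofReal ((ρ + δ) ^ finrank ℝ E) * μ (ball 0 1) :=
          Measure.addHaar_closedBall μ _ (by positivity)
  rwa [ENNReal.mul_le_mul_iff_left (measure_ball_pos μ 0 one_pos).ne' measure_ball_lt_top.ne,
    ← ENNReal.ofReal_natCast, ← ENNReal.ofReal_mul (by positivity),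
    ENNReal.ofReal_le_ofReal_iff (by positivity)] at hvol

theorem packingNumber_le_of_subset_closedBall {A : Set E} {x : E} {ρ : ℝ} {ε : ℝ≥0}
    (hρ : 0 ≤ ρ) (hε : 0 < ε) (hA : A ⊆ closedBall x ρ) :
    packingNumber ε A ≤ ⌊(2 * ρ / ε + 1) ^ finrank ℝ E⌋₊ := by
  set N := ⌊(2 * ρ / ε + 1) ^ finrank ℝ E⌋₊
  simp only [packingNumber, iSup_le_iff]
  intro C hCA hC
  by_contra! hlt
  obtain ⟨F, hFC, hF⟩ := Set.exists_subset_encard_eq (Order.add_one_le_of_lt hlt)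
  have hFfin : F.Finite := Set.finite_of_encard_eq_coe (k := N + 1) (by simpa using hF)
  have hcard : #hFfin.toFinset = N + 1 := by
    rw [hFfin.encard_eq_coe_toFinset_card] at hF
    exact_mod_cast hF
  have hdisj : F.PairwiseDisjoint (closedBall · (ε / 2)) := fun s hs t ht hst ↦ by
    have hsep : (ε : ℝ) < dist s t := by
      simpa [edist_dist, ENNReal.coe_lt_ofReal] using (hC.subset hFC) hs ht hst
    exact closedBall_disjoint_closedBall (by linarith)
  have hpack := card_mul_pow_le_of_pairwiseDisjoint_closedBall (F := hFfin.toFinset)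
    (δ := ε / 2) hρ (by positivity) (by simpa using (hFC.trans hCA).trans hA)
    (by simpa using hdisj)
  have hratio : ρ + ε / 2 = (2 * ρ / ε + 1) * (ε / 2) := by field_simp
  rw [hcard, hratio, mul_pow] at hpack
  have hcard_le := le_of_mul_le_mul_right hpack (by positivity)
  push_cast at hcard_le
  linarith [Nat.lt_floor_add_one ((2 * ρ / ε + 1) ^ finrank ℝ E)]

end Packing

theorem remond_covering_lemma_general
    (r : ℕ) (ρ : ℝ) (hρ : 0 < ρ)
    (x₀ : EuclideanSpace ℝ (Fin r)) (S : Set (EuclideanSpace ℝ (Fin r)))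
    (hS : S ⊆ Metric.closedBall x₀ ρ) (γ : ℝ) (hγ : 1 ≤ γ) :
    ∃ I : Finset (EuclideanSpace ℝ (Fin r)),
      ↑I ⊆ S ∧ (I.card : ℤ) ≤ ⌊(2 * γ + 1) ^ r⌋ ∧
      S ⊆ ⋃ c ∈ I, Metric.closedBall c (ρ / γ) := by
  have hγ₀ : 0 < γ := by linarith
  have hradius : ((ρ / γ).toNNReal : ℝ) = ρ / γ := Real.coe_toNNReal _ (by positivity)
  have hpacking := packingNumber_le_of_subset_closedBall (ε := (ρ / γ).toNNReal) hρ.le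
    (Real.toNNReal_pos.2 (by positivity)) hS
  rw [hradius, finrank_euclideanSpace_fin, show 2 * ρ / (ρ / γ) = 2 * γ by field_simp]
    at hpacking
  have hcovering := (coveringNumber_le_packingNumber _ S).trans hpacking
  obtain ⟨C, hCS, hCfin, hCcover, hCcard⟩ :=
    exists_set_encard_eq_coveringNumber (hcovering.trans_lt (ENat.natCast_lt_top _)).ne
  refine ⟨hCfin.toFinset, by simpa using hCS, ?_, ?_⟩
  · rw [← Int.natCast_floor_eq_floor (by positivity)]
    rw [← hCcard, hCfin.encard_eq_coe_toFinset_card] at hcovering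
    exact_mod_cast hcovering
  · simpa [hradius] using hCcover.subset_iUnion_closedBall

/-- Rémond's covering lemma: a subset `S` of `ℝ^r` contained in a closed ball of
radius `ρ` can be covered by at most `⌊(2γ+1)^r⌋` closed balls of radius `ρ/γ`
centered at points of `S`. -/
theorem remond_covering_lemma
    (r : ℕ) (hr : 0 < r) (ρ : ℝ) (hρ : 0 < ρ)
    (x₀ : EuclideanSpace ℝ (Fin r)) (S : Set (EuclideanSpace ℝ (Fin r)))
    (hS : S ⊆ Metric.closedBall x₀ ρ) (γ : ℝ) (hγ : 1 ≤ γ) :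
    ∃ I : Finset (EuclideanSpace ℝ (Fin r)),
      ↑I ⊆ S ∧ (I.card : ℤ) ≤ ⌊(2 * γ + 1) ^ r⌋ ∧
      S ⊆ ⋃ c ∈ I, Metric.closedBall c (ρ / γ) :=
  remond_covering_lemma_general r ρ hρ x₀ S hS γ hγ
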